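/- Let N ≥ 3 be an integer and let a ∈ Z_N^* with a > N/2 and canonical continued fraction expansion a/N = [0; a_1, a_2, …, a_r] (so that a_1 = 1). Define a* by a*/N = [0; 1, a_r − 1, a_{r−1}, a_{r−2}, …, a_3, a_2 + 1]. Then the map a ↦ a* is a bijection from { a ∈ Z_N^* : a > N/2 } onto itself. -/

import Mathlib

open scoped BigOperators
open MeasureTheory

attribute [local instance] Classical.propDecidable

noncomputable section

/-- Value of the continued fraction `[0; a_1, ..., a_r]` given by the list `[a_1, ..., a_r]`. -/
def cfValQ : List ℕ → ℚ
  | [] => 0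
  | a :: l => 1 / ((a : ℚ) + cfValQ l)

/-- `l` is the canonical continued fraction expansion of `q`: all partial quotients are
positive, the last one is `> 1`, and the value is `q`. -/
def IsCF (q : ℚ) (l : List ℕ) : Prop :=
  (∀ x ∈ l, 1 ≤ x) ∧ (∀ x, l.getLast? = some x → 2 ≤ x) ∧ cfValQ l = q

/-- The canonical continued fraction expansion `[a_1, ..., a_r]` of a rational `q`
(the empty list if none exists). -/
def cfList (q : ℚ) : List ℕ :=
  if h : ∃ l, IsCF q l then h.choose else []

/-- `Z_N^*`: the integers `1 ≤ a ≤ N` coprime with `N`. -/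
def Zstar (N : ℕ) : Finset ℕ := (Finset.Icc 1 N).filter fun a => Nat.Coprime a N

/-- Increment the first entry of a list. -/
def incHead : List ℕ → List ℕ
  | [] => []
  | a :: l => (a + 1) :: l

/-- For `l = [a_1, a_2, ..., a_r]` (with `a_1 = 1`), produce the list
`[1, a_r - 1, a_{r-1}, ..., a_3, a_2 + 1]`. -/
def flipList (l : List ℕ) : List ℕ :=
  match (incHead l.tail).reverse with
  | [] => []
  | a :: rest => 1 :: (a - 1) :: rest

/-- The map `a ↦ a*`, where `a*/N = [0; 1, a_r - 1, a_{r-1}, ..., a_3, a_2 + 1]` for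
`a/N = [0; a_1, a_2, ..., a_r]` with `a_1 = 1`. -/
def starMap' (N a : ℕ) : ℕ :=
  (((N : ℚ) * cfValQ (flipList (cfList ((a : ℚ) / N)))).num).toNat


/-!
For `a > N/2` the expansion of `a/N` is `[0; 1, a₂, …, a_r]`, and `1 - a/N = [0; a₂ + 1, a₃, …, a_r]`.
Reversing a continued fraction does not change its denominator: the denominator is the top-left
entry of `∏ [[aᵢ, 1], [1, 0]]`, and reversing the list transposes the product. Hence
`[0; a_r, …, a₃, a₂ + 1] = p/N` with `p < N/2` coprime to `N`, and `a*/N = 1 - p/N` has the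
canonical expansion `[0; 1, a_r - 1, a_{r-1}, …, a₂ + 1]`. Running the construction on this
expansion undoes each step, so `a ↦ a*` is an involution of `{a ∈ Z_N^* : a > N/2}`.
-/

lemma den_natCast_div_eq_iff {a N : ℕ} (hN : 0 < N) :
    ((a : ℚ) / N).den = N ↔ Nat.Coprime a N := by
  rw [← Int.cast_natCast a, ← Rat.mkRat_eq_div, Rat.den_mkRat, if_neg hN.ne', Int.natAbs_natCast,
    Nat.div_eq_self, Nat.gcd_comm]
  simp [hN.ne', Nat.Coprime]

lemma cfValQ_nonneg (l : List ℕ) : 0 ≤ cfValQ l := by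
  cases l with
  | nil => exact le_rfl
  | cons a l => exact one_div_nonneg.2 (add_nonneg a.cast_nonneg (cfValQ_nonneg l))

lemma cfValQ_cons_pos {a : ℕ} (ha : 1 ≤ a) (l : List ℕ) : 0 < cfValQ (a :: l) := by
  have : (1 : ℚ) ≤ a := by exact_mod_cast ha
  exact one_div_pos.2 (by linarith [cfValQ_nonneg l])

lemma cfValQ_one_cons_cons {b : ℕ} (hb : 1 ≤ b) (t : List ℕ) :
    cfValQ (1 :: b :: t) = 1 - cfValQ ((b + 1) :: t) := by
  have hb' : (1 : ℚ) ≤ b := by exact_mod_cast hb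
  have ht := cfValQ_nonneg t
  simp only [cfValQ]
  push_cast
  field_simp
  ring

/-- `(numerator, denominator)` of `[0; a₁, …, a_r]`, by the continuant recursion. -/
def cfNumDen : List ℕ → ℕ × ℕ
  | [] => (0, 1)
  | a :: l => ((cfNumDen l).2, a * (cfNumDen l).2 + (cfNumDen l).1)

lemma cfNumDen_coprime (l : List ℕ) : Nat.Coprime (cfNumDen l).1 (cfNumDen l).2 := by
  induction l with
  | nil => simp [cfNumDen]
  | cons a l ih =>
    simpa [cfNumDen, Nat.coprime_comm, Nat.add_comm] using
      (Nat.coprime_add_mul_left_right (cfNumDen l).2 (cfNumDen l).1 a).2 ih.symm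

lemma cfNumDen_snd_pos {l : List ℕ} (hl : ∀ x ∈ l, 1 ≤ x) : 0 < (cfNumDen l).2 := by
  induction l with
  | nil => simp [cfNumDen]
  | cons a l ih =>
    have ha := hl a List.mem_cons_self
    have := ih fun x hx => hl x (List.mem_cons_of_mem a hx)
    simp only [cfNumDen]
    nlinarith

lemma cfValQ_eq_cfNumDen {l : List ℕ} (hl : ∀ x ∈ l, 1 ≤ x) :
    cfValQ l = (cfNumDen l).1 / (cfNumDen l).2 := by
  induction l with
  | nil => simp [cfValQ, cfNumDen]
  | cons a l ih =>
    have hl' : ∀ x ∈ l, 1 ≤ x := fun x hx => hl x (List.mem_cons_of_mem a hx)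
    have hq : (0 : ℚ) < (cfNumDen l).2 := by exact_mod_cast cfNumDen_snd_pos hl'
    simp only [cfValQ, cfNumDen, ih hl']
    push_cast
    field_simp

lemma den_cfValQ {l : List ℕ} (hl : ∀ x ∈ l, 1 ≤ x) : (cfValQ l).den = (cfNumDen l).2 := by
  rw [cfValQ_eq_cfNumDen hl, den_natCast_div_eq_iff (cfNumDen_snd_pos hl)]
  exact cfNumDen_coprime l

def cfMatrix (a : ℕ) : Matrix (Fin 2) (Fin 2) ℕ := !![a, 1; 1, 0]

lemma prod_map_cfMatrix_apply (l : List ℕ) :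
    (l.map cfMatrix).prod 0 0 = (cfNumDen l).2 ∧ (l.map cfMatrix).prod 1 0 = (cfNumDen l).1 := by
  induction l with
  | nil => simp [cfNumDen]
  | cons a l ih =>
    simp [List.map_cons, List.prod_cons, cfNumDen, Matrix.mul_apply, Fin.sum_univ_two, cfMatrix,
      ih.1, ih.2]

lemma cfNumDen_reverse_snd (l : List ℕ) : (cfNumDen l.reverse).2 = (cfNumDen l).2 := by
  have hT : (l.map cfMatrix).map Matrix.transpose = l.map cfMatrix := by
    rw [List.map_map]
    congr 1
    funext a
    ext i j
    fin_cases i <;> fin_cases j <;> rfl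
  have h := Matrix.transpose_list_prod (l.map cfMatrix)
  rw [hT, ← List.map_reverse] at h
  rw [← (prod_map_cfMatrix_apply l).1, ← (prod_map_cfMatrix_apply l.reverse).1, ← h]
  rfl

lemma den_cfValQ_reverse {l : List ℕ} (hl : ∀ x ∈ l, 1 ≤ x) :
    (cfValQ l.reverse).den = (cfValQ l).den := by
  rw [den_cfValQ hl, den_cfValQ fun x hx => hl x (List.mem_reverse.1 hx), cfNumDen_reverse_snd]

namespace IsCF

variable {q : ℚ} {a b : ℕ} {l t : List ℕ}

lemma tail (h : IsCF q (a :: l)) : IsCF (cfValQ l) l := by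
  refine ⟨fun x hx => h.1 x (List.mem_cons_of_mem a hx), fun x hx => h.2.1 x ?_, rfl⟩
  cases l with
  | nil => simp at hx
  | cons => rwa [List.getLast?_cons_cons]

lemma inv_eq (h : IsCF q (a :: l)) : q⁻¹ = a + cfValQ l := by
  rw [← h.2.2, cfValQ, one_div, inv_inv]

lemma pos (h : IsCF q (a :: l)) : 0 < q :=
  h.2.2 ▸ cfValQ_cons_pos (h.1 a List.mem_cons_self) l

lemma lt_one (h : IsCF q l) : q < 1 := by
  rcases l with _ | ⟨a, _ | ⟨b, t⟩⟩
  · simp [← h.2.2, cfValQ]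
  · have : (2 : ℚ) ≤ a := by exact_mod_cast h.2.1 a rfl
    rw [← h.2.2]
    simp only [cfValQ, add_zero]
    rw [div_lt_one (by linarith)]
    linarith
  · have ha : (1 : ℚ) ≤ a := by exact_mod_cast h.1 a List.mem_cons_self
    have hv := h.tail.pos
    rw [← h.2.2, cfValQ, div_lt_one (by linarith)]
    linarith

lemma head_eq_floor (h : IsCF q (a :: l)) : a = ⌊q⁻¹⌋₊ := by
  rw [h.inv_eq, eq_comm, Nat.floor_eq_iff (add_nonneg a.cast_nonneg (cfValQ_nonneg l))]
  exact ⟨le_add_of_nonneg_right (cfValQ_nonneg l), by linarith [h.tail.lt_one]⟩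

lemma unique {l' : List ℕ} (h : IsCF q l) (h' : IsCF q l') : l = l' := by
  induction l generalizing q l' with
  | nil =>
    cases l' with
    | nil => rfl
    | cons a' m' => exact absurd (h.2.2.symm ▸ h'.pos) (lt_irrefl 0)
  | cons a m ih =>
    cases l' with
    | nil => exact absurd (h'.2.2.symm ▸ h.pos) (lt_irrefl 0)
    | cons a' m' =>
      have ha : a = a' := h.head_eq_floor.trans h'.head_eq_floor.symm
      subst ha
      have hv : cfValQ m' = cfValQ m := by linarith [h.inv_eq, h'.inv_eq]
      rw [ih h.tail ⟨h'.tail.1, h'.tail.2.1, hv⟩]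

lemma cfList_eq (h : IsCF q l) : cfList q = l := by
  have hex : ∃ l, IsCF q l := ⟨l, h⟩
  rw [cfList, dif_pos hex]
  exact hex.choose_spec.unique h

lemma one_half_lt (h : IsCF q (1 :: l)) : 1 / 2 < q := by
  rw [← h.2.2, cfValQ, Nat.cast_one]
  have := h.tail.lt_one
  have := cfValQ_nonneg l
  rw [div_lt_div_iff₀ (by norm_num) (by linarith)]
  linarith

lemma exists_eq_one_cons_cons (h : IsCF q l) (hq : 1 / 2 < q) : ∃ b t, l = 1 :: b :: t := by
  obtain _ | ⟨a, m⟩ := l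
  · have : q = 0 := h.2.2.symm
    linarith
  have ha : a = 1 := by
    have ha1 := h.1 a List.mem_cons_self
    have hinv : q⁻¹ < 2 := (inv_lt_comm₀ h.pos two_pos).2 (by linarith)
    have : (a : ℚ) < 2 := by linarith [h.inv_eq, cfValQ_nonneg m]
    have : a < 2 := by exact_mod_cast this
    omega
  subst ha
  obtain _ | ⟨b, t⟩ := m
  · exact absurd (h.2.1 1 rfl) (by norm_num)
  · exact ⟨b, t, rfl⟩

lemma one_sub_succ_cons (h : IsCF q (1 :: b :: t)) : IsCF (1 - q) ((b + 1) :: t) := by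
  have hb : 1 ≤ b := h.1 b (by simp)
  refine ⟨fun x hx => ?_, fun x hx => ?_, ?_⟩
  · rcases List.mem_cons.1 hx with rfl | hx
    · omega
    · exact h.1 x (by simp [hx])
  · cases t with
    | nil =>
      simp only [List.getLast?_singleton, Option.some.injEq] at hx
      omega
    | cons c t => exact h.2.1 x (by simpa using hx)
  · rw [← h.2.2, cfValQ_one_cons_cons hb]
    ring

lemma one_sub_one_cons (h : IsCF q (a :: l)) (ha : 2 ≤ a) (h2 : a :: l ≠ [2]) :
    IsCF (1 - q) (1 :: (a - 1) :: l) := by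
  refine ⟨fun x hx => ?_, fun x hx => ?_, ?_⟩
  · simp only [List.mem_cons] at hx
    rcases hx with rfl | rfl | hx
    · exact le_rfl
    · omega
    · exact h.1 x (List.mem_cons_of_mem a hx)
  · cases l with
    | nil =>
      simp only [List.getLast?_cons_cons, List.getLast?_singleton, Option.some.injEq] at hx
      have : a ≠ 2 := fun h' => h2 (h' ▸ rfl)
      omega
    | cons c l => exact h.2.1 x (by simpa using hx)
  · rw [cfValQ_one_cons_cons (by omega), Nat.sub_add_cancel (by omega : 1 ≤ a), h.2.2]

end IsCF

lemma isCF_reverse {l : List ℕ} (hl : ∀ x ∈ l, 1 ≤ x) (hhead : ∀ x, l.head? = some x → 2 ≤ x) :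
    IsCF (cfValQ l.reverse) l.reverse :=
  ⟨fun x hx => hl x (List.mem_reverse.1 hx),
    fun x hx => hhead x (by rwa [List.getLast?_reverse] at hx), rfl⟩

lemma exists_isCF_natCast_div {p n : ℕ} (hp : 0 < p) (hpn : p < n) :
    ∃ l, IsCF ((p : ℚ) / n) l := by
  induction p using Nat.strong_induction_on generalizing n with
  | _ p ih =>
  have hk : 1 ≤ n / p := (Nat.one_le_div_iff hp).2 hpn.le
  have hpQ : (p : ℚ) ≠ 0 := by positivity
  have hn : (n : ℚ) = p * (n / p : ℕ) + (n % p : ℕ) := by exact_mod_cast (Nat.div_add_mod n p).symm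
  rcases Nat.eq_zero_or_pos (n % p) with hs | hs
  · have hk2 : 2 ≤ n / p := by
      have := Nat.div_add_mod n p
      rw [hs] at this
      by_contra hk2
      have : n / p = 1 := by omega
      nlinarith
    refine ⟨[n / p], by simpa using hk, by simpa using hk2, ?_⟩
    rw [hn, hs]
    simp only [cfValQ]
    field_simp
    ring
  · obtain ⟨l, hl⟩ := ih (n % p) (Nat.mod_lt n hp) hs (Nat.mod_lt n hp)
    have hne : l ≠ [] := by
      rintro rfl
      have : ((n % p : ℕ) : ℚ) / p = 0 := hl.2.2.symm
      simp [hpQ] at this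
      omega
    refine ⟨n / p :: l, ?_, ?_, ?_⟩
    · simpa [hk] using hl.1
    · obtain ⟨c, l', rfl⟩ := List.exists_cons_of_ne_nil hne
      simpa using hl.2.1
    · simp only [cfValQ, hl.2.2]
      rw [hn]
      field_simp

lemma exists_isCF {q : ℚ} (h0 : 0 < q) (h1 : q < 1) : ∃ l, IsCF q l := by
  have hnum : 0 < q.num := Rat.num_pos.2 h0
  have hq : ((q.num.toNat : ℕ) : ℚ) / q.den = q := by
    rw [show ((q.num.toNat : ℕ) : ℚ) = (q.num : ℚ) by exact_mod_cast Int.toNat_of_nonneg hnum.le]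
    exact Rat.num_div_den q
  have hlt : q.num < q.den := Rat.num_lt_denom_iff.2 h1
  exact hq ▸ exists_isCF_natCast_div (by omega) (by omega)

lemma IsCF.flipList_spec {q : ℚ} {l : List ℕ} (h : IsCF q l) (hq : 1 / 2 < q) :
    IsCF (cfValQ (flipList l)) (flipList l) ∧ 1 / 2 < cfValQ (flipList l) ∧
      (cfValQ (flipList l)).den = q.den ∧ flipList (flipList l) = l := by
  obtain ⟨b, t, rfl⟩ := h.exists_eq_one_cons_cons hq
  have hM := h.one_sub_succ_cons
  obtain ⟨c, r, hR⟩ : ∃ c r, ((b + 1) :: t).reverse = c :: r :=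
    List.exists_cons_of_ne_nil (by simp)
  have hc : 2 ≤ c := hM.2.1 c (by rw [← List.head?_reverse, hR]; rfl)
  have hb : 1 ≤ b := h.1 b (by simp)
  have hRcf := isCF_reverse hM.1 fun x hx => by
    simp only [List.head?_cons, Option.some.injEq] at hx
    omega
  rw [hR] at hRcf
  -- `c :: r = [2]` would force `l = [1, 1]`, which is not canonical.
  have h2 : c :: r ≠ [2] := by
    intro h2
    rw [h2, List.reverse_eq_cons_iff] at hR
    simp only [List.reverse_nil, List.nil_append, List.cons.injEq] at hR
    obtain ⟨hb1, rfl⟩ := hR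
    have := h.2.1 b (by simp)
    omega
  have hF := hRcf.one_sub_one_cons hc h2
  have hflip : flipList (1 :: b :: t) = 1 :: (c - 1) :: r := by simp [flipList, incHead, hR]
  rw [hflip, hF.2.2]
  refine ⟨hF, hF.one_half_lt, ?_, ?_⟩
  · rw [← Nat.cast_one, Rat.natCast_sub_den, ← hR, den_cfValQ_reverse hM.1, hM.2.2, ← Nat.cast_one,
      Rat.natCast_sub_den]
  · have hR' : (c :: r).reverse = (b + 1) :: t := by rw [← hR, List.reverse_reverse]
    simp [flipList, incHead, Nat.sub_add_cancel (by omega : 1 ≤ c), hR']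

/-- The rational `a*/N` as a function of `a/N`. -/
def starQ (q : ℚ) : ℚ := cfValQ (flipList (cfList q))

lemma starQ_mem_Ioo_and_den {q : ℚ} (hq : q ∈ Set.Ioo (1 / 2) 1) :
    starQ q ∈ Set.Ioo (1 / 2) 1 ∧ (starQ q).den = q.den := by
  obtain ⟨l, hl⟩ := exists_isCF (by linarith [hq.1]) hq.2
  obtain ⟨hF, hhalf, hden, -⟩ := hl.flipList_spec hq.1
  rw [starQ, hl.cfList_eq]
  exact ⟨⟨hhalf, hF.lt_one⟩, hden⟩

lemma starQ_starQ {q : ℚ} (hq : q ∈ Set.Ioo (1 / 2) 1) : starQ (starQ q) = q := by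
  obtain ⟨l, hl⟩ := exists_isCF (by linarith [hq.1]) hq.2
  obtain ⟨hF, -, -, hinv⟩ := hl.flipList_spec hq.1
  rw [starQ, starQ, hl.cfList_eq, hF.cfList_eq, hinv, hl.2.2]

lemma mem_Zstar_and_lt_two_mul_iff {N a : ℕ} (hN : 2 ≤ N) :
    a ∈ Zstar N ∧ N < 2 * a ↔ ((a : ℚ) / N).den = N ∧ (a : ℚ) / N ∈ Set.Ioo (1 / 2) 1 := by
  have hN0 : (0 : ℚ) < N := by positivity
  rw [den_natCast_div_eq_iff (by omega), Set.mem_Ioo, div_lt_div_iff₀ two_pos hN0,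
    div_lt_one hN0, Zstar, Finset.mem_filter, Finset.mem_Icc]
  norm_cast
  constructor
  · rintro ⟨⟨⟨-, haN⟩, hc⟩, h2a⟩
    refine ⟨hc, by omega, lt_of_le_of_ne haN ?_⟩
    rintro rfl
    rw [Nat.coprime_self] at hc
    omega
  · rintro ⟨hc, h2a, haN⟩
    exact ⟨⟨⟨by omega, haN.le⟩, hc⟩, by omega⟩

lemma starMap'_spec {N a : ℕ} (hN : 2 ≤ N) (ha : a ∈ Zstar N ∧ N < 2 * a) :
    (starMap' N a : ℚ) / N = starQ (a / N) ∧ starMap' N a ∈ Zstar N ∧ N < 2 * starMap' N a := by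
  obtain ⟨hden, hq⟩ := (mem_Zstar_and_lt_two_mul_iff hN).1 ha
  obtain ⟨hy, hyden⟩ := starQ_mem_Ioo_and_den hq
  set y := starQ (a / N)
  have hN0 : (N : ℚ) ≠ 0 := by positivity
  have hnum : (N : ℚ) * y = y.num := by rw [← hden, ← hyden, mul_comm, Rat.mul_den_eq_num]
  have hcast : (starMap' N a : ℚ) = N * y := by
    have hnn : 0 ≤ y.num := Rat.num_nonneg.2 (by linarith [hy.1])
    change ((((N : ℚ) * y).num.toNat : ℕ) : ℚ) = _
    rw [hnum, Rat.num_intCast]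
    exact_mod_cast Int.toNat_of_nonneg hnn
  have hdiv : (starMap' N a : ℚ) / N = y := by rw [hcast, mul_div_cancel_left₀ _ hN0]
  exact ⟨hdiv, (mem_Zstar_and_lt_two_mul_iff hN).2 (hdiv ▸ ⟨hyden.trans hden, hy⟩)⟩

lemma starMap'_starMap' {N a : ℕ} (hN : 2 ≤ N) (ha : a ∈ Zstar N ∧ N < 2 * a) :
    starMap' N (starMap' N a) = a := by
  obtain ⟨hdiv, hb⟩ := starMap'_spec hN ha
  have hq := ((mem_Zstar_and_lt_two_mul_iff hN).1 ha).2
  have h : (starMap' N (starMap' N a) : ℚ) / N = a / N := by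
    rw [(starMap'_spec hN hb).1, hdiv, starQ_starQ hq]
  exact_mod_cast (div_left_inj' (by positivity)).1 h

theorem stmt19 (N : ℕ) (hN : 3 ≤ N) :
    (∀ a, a ∈ Zstar N → N < 2 * a →
        ((starMap' N a : ℚ) / N = cfValQ (flipList (cfList ((a : ℚ) / N))))) ∧
    Set.BijOn (starMap' N) {a | a ∈ Zstar N ∧ N < 2 * a}
      {a | a ∈ Zstar N ∧ N < 2 * a} := by
  have hN2 : 2 ≤ N := by omega
  refine ⟨fun a ha h2a => (starMap'_spec hN2 ⟨ha, h2a⟩).1, ?_⟩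
  have hmaps : Set.MapsTo (starMap' N) {a | a ∈ Zstar N ∧ N < 2 * a}
      {a | a ∈ Zstar N ∧ N < 2 * a} := fun a ha => (starMap'_spec hN2 ha).2
  have hinv : Set.LeftInvOn (starMap' N) (starMap' N) {a | a ∈ Zstar N ∧ N < 2 * a} :=
    fun a ha => starMap'_starMap' hN2 ha
  exact Set.InvOn.bijOn ⟨hinv, hinv⟩ hmaps hmaps
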